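/- Let K be a field of characteristic 0 and J a finite set. For α ≠ β in J define the convolution operator Conv_{α,β} : R_J → R_J by Conv_{α,β}(P) := [α,β]·∂²P/(∂α₀ ∂β₀), where [α,β] = α₀β₁ − α₁β₀. Then ker D equals the K-subalgebra of R_J generated by the variables γ₀ (γ ∈ J) together with all convolutions Conv_{α,β}(M) of monomials M in the variables {γ₀ : γ ∈ J}. -/

import Mathlib

/-!
Write `Δ_{ab} = ∑_γ γ_a ∂/∂γ_b`, so that `D = Δ₀₁`, and let
`Ω_{αβ} = ∂²/∂α₀∂β₁ - ∂²/∂β₀∂α₁` be Cayley's Ω-process. Each `Ω_{αβ}` commutes with `D`, and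
`∑_{α,β} [α,β] Ω_{αβ} = 2 (Δ₀₀ Δ₁₁ + Δ₁₁ - Δ₁₀ Δ₀₁)`. By Euler's identity a `D`-constant `P` of
degree `p` in the `γ₀` and `q` in the `γ₁` therefore satisfies
`2 q (p + 1) P = ∑_{α,β} [α,β] Ω_{αβ} P`, where every `Ω_{αβ} P` is again a `D`-constant, of
bidegree `(p - 1, q - 1)`. Induction on `q`, starting from the polynomials in the `γ₀` alone,
puts `P` in the algebra generated by the `γ₀` and the brackets `[α,β] = Conv_{α,β}(α₀ β₀)`.
Since `D` preserves the total degree and raises the degree in the `γ₀` by one, the bihomogeneous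
components of a `D`-constant are `D`-constants. Conversely `D` kills the `γ₀` and the brackets,
hence every `Conv_{α,β}(M)`, which is a bracket times a polynomial in the `γ₀`.
-/

open MvPolynomial

namespace MvPolynomial

variable {R σ : Type*} [CommSemiring R]

theorem pderiv_pderiv_comm (i j : σ) (P : MvPolynomial σ R) :
    pderiv i (pderiv j P) = pderiv j (pderiv i P) := by
  classical
  induction P using MvPolynomial.induction_on with
  | C a => simp
  | add p q hp hq => simp only [map_add, hp, hq]
  | mul_X p k hp =>
    simp only [pderiv_mul, map_add, hp, pderiv_X, Pi.single_apply]
    split_ifs <;> simp [add_comm, add_left_comm]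

theorem vars_pderiv_subset (i : σ) (P : MvPolynomial σ R) : (pderiv i P).vars ⊆ P.vars := by
  classical
  intro j hj
  obtain ⟨d, hd, hdj⟩ := (mem_vars_iff_mem_support j).mp hj
  rw [mem_support_iff, coeff_pderiv] at hd
  refine (mem_vars_iff_mem_support j).mpr
    ⟨d + Finsupp.single i 1, mem_support_iff.mpr (left_ne_zero_of_mul hd), ?_⟩
  rw [Finsupp.mem_support_iff] at hdj ⊢
  simp [hdj]

theorem pderiv_mem_supported {s : Set σ} {P : MvPolynomial σ R} (hP : P ∈ supported R s)
    (i : σ) : pderiv i P ∈ supported R s := by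
  rw [mem_supported] at hP ⊢
  exact (Finset.coe_subset.mpr (vars_pderiv_subset i P)).trans hP

theorem IsWeightedHomogeneous.pderiv_eq_zero_of_lt {w : σ → ℕ} {P : MvPolynomial σ R} {n : ℕ}
    {i : σ} (hP : P.IsWeightedHomogeneous w n) (hn : n < w i) : pderiv i P = 0 := by
  refine pderiv_eq_zero_of_notMem_vars fun hi => ?_
  obtain ⟨d, hd, hdi⟩ := (mem_vars_iff_mem_support i).mp hi
  have := Finsupp.le_weight_of_ne_zero' w (Finsupp.mem_support_iff.mp hdi)
  rw [hP (mem_support_iff.mp hd)] at this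
  omega

theorem IsWeightedHomogeneous.pderiv_tsub {w : σ → ℕ} {P : MvPolynomial σ R} {n : ℕ}
    (hP : P.IsWeightedHomogeneous w n) (i : σ) :
    (pderiv i P).IsWeightedHomogeneous w (n - w i) := by
  rcases le_or_gt (w i) n with hle | hlt
  · exact hP.pderiv (Nat.sub_add_cancel hle)
  · rw [hP.pderiv_eq_zero_of_lt hlt]
    exact isWeightedHomogeneous_zero R w _

theorem IsWeightedHomogeneous.X_mul_pderiv {w : σ → ℕ} {P : MvPolynomial σ R} {m n : ℕ}
    (hP : P.IsWeightedHomogeneous w n) {i j : σ} (hm : m + w i = n + w j) :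
    (X j * pderiv i P).IsWeightedHomogeneous w m := by
  rcases le_or_gt (w i) n with hle | hlt
  · convert (isWeightedHomogeneous_X R w j).mul (hP.pderiv_tsub i) using 1
    omega
  · rw [hP.pderiv_eq_zero_of_lt hlt, mul_zero]
    exact isWeightedHomogeneous_zero R w _

theorem IsWeightedHomogeneous.weightedHomogeneousComponent {M M' : Type*} [AddCommMonoid M]
    [AddCommMonoid M'] {w : σ → M} {P : MvPolynomial σ R} {n : M}
    (hP : P.IsWeightedHomogeneous w n) (w' : σ → M') (m : M') :
    (weightedHomogeneousComponent w' m P).IsWeightedHomogeneous w n := by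
  classical
  intro d hd
  rw [coeff_weightedHomogeneousComponent] at hd
  split_ifs at hd
  · exact hP hd
  · exact absurd rfl hd

theorem weightedHomogeneousComponent_add_apply {M : Type*} [AddCancelCommMonoid M]
    {w : σ → M} {k : M} {L : MvPolynomial σ R →ₗ[R] MvPolynomial σ R}
    (hL : ∀ n P, IsWeightedHomogeneous w P n → IsWeightedHomogeneous w (L P) (n + k))
    (n : M) (P : MvPolynomial σ R) :
    weightedHomogeneousComponent w (n + k) (L P) = L (weightedHomogeneousComponent w n P) := by
  conv_lhs => rw [← sum_weightedHomogeneousComponent w P,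
    finsum_eq_sum _ (weightedHomogeneousComponent_finsupp P), map_sum, map_sum]
  rw [Finset.sum_eq_single n]
  · exact (hL n _ (weightedHomogeneousComponent_isWeightedHomogeneous n P)
      ).weightedHomogeneousComponent_same
  · intro m _ hmn
    exact (hL m _ (weightedHomogeneousComponent_isWeightedHomogeneous m P)
      ).weightedHomogeneousComponent_ne _ fun h => hmn (add_right_cancel h).symm
  · intro hn
    have hzero : weightedHomogeneousComponent w n P = 0 :=
      not_not.mp fun hne => hn ((Set.Finite.mem_toFinset _).mpr hne)
    rw [hzero, map_zero, map_zero]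

theorem mem_of_forall_weightedHomogeneousComponent_mem {M S : Type*} [AddCommMonoid M]
    [SetLike S (MvPolynomial σ R)] [AddSubmonoidClass S (MvPolynomial σ R)] {s : S}
    (w : σ → M) {P : MvPolynomial σ R} (h : ∀ n, weightedHomogeneousComponent w n P ∈ s) :
    P ∈ s := by
  rw [← sum_weightedHomogeneousComponent w P,
    finsum_eq_sum _ (weightedHomogeneousComponent_finsupp P)]
  exact sum_mem fun n _ => h n

end MvPolynomial

namespace RaisingKernel

variable {K J : Type*}

local notation "R_J" => MvPolynomial (J × Fin 2) K

def slotWeight (a : Fin 2) : J × Fin 2 → ℕ := fun i => if i.2 = a then 1 else 0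

section CommRing

variable [CommRing K]

noncomputable def bracket (α β : J) : R_J := X (α, 0) * X (β, 1) - X (α, 1) * X (β, 0)

noncomputable def cayley (α β : J) (P : R_J) : R_J :=
  pderiv (α, 0) (pderiv (β, 1) P) - pderiv (β, 0) (pderiv (α, 1) P)

theorem isWeightedHomogeneous_cayley {a : Fin 2} {P : R_J} {n : ℕ}
    (hP : P.IsWeightedHomogeneous (slotWeight a) n) (α β : J) :
    (cayley α β P).IsWeightedHomogeneous (slotWeight a) (n - 1) := by
  have h (α β : J) :
      (pderiv (α, 0) (pderiv (β, 1) P)).IsWeightedHomogeneous (slotWeight a) (n - 1) := by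
    have := (hP.pderiv_tsub (β, 1)).pderiv_tsub (α, 0)
    fin_cases a <;> simpa [slotWeight] using this
  exact (h α β).sub (h β α)

theorem mem_supported_of_isWeightedHomogeneous_slotWeight_one {P : R_J}
    (hP : P.IsWeightedHomogeneous (slotWeight 1) 0) :
    P ∈ supported K {i : J × Fin 2 | i.2 = 0} := by
  rw [mem_supported]
  intro ⟨γ, b⟩ hi
  obtain ⟨d, hd, hdi⟩ := (mem_vars_iff_mem_support _).mp hi
  have := Finsupp.le_weight_of_ne_zero' (slotWeight 1) (Finsupp.mem_support_iff.mp hdi)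
  rw [hP (mem_support_iff.mp hd)] at this
  fin_cases b <;> simp_all [slotWeight]

variable [Fintype J]

noncomputable def polarization (a b : Fin 2) : Derivation K R_J R_J :=
  ∑ γ : J, (X (γ, a) : R_J) • pderiv (γ, b)

theorem polarization_apply (a b : Fin 2) (P : R_J) :
    polarization a b P = ∑ γ : J, X (γ, a) * pderiv (γ, b) P := by
  rw [polarization, ← Derivation.coeFnAddMonoidHom_apply, map_sum, Finset.sum_apply]
  rfl

theorem polarization_X (a b : Fin 2) (γ : J) (c : Fin 2) :
    polarization a b (X (γ, c) : R_J) = if b = c then X (γ, a) else 0 := by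
  classical
  simp [polarization_apply, pderiv_X, Pi.single_apply, ite_and, eq_comm (a := c)]

theorem mkDerivation_eq_polarization :
    mkDerivation K (fun v : J × Fin 2 => if v.2 = 0 then 0 else X (v.1, 0)) =
      (polarization 0 1 : Derivation K R_J R_J) := by
  refine derivation_ext fun ⟨γ, b⟩ => ?_
  rw [mkDerivation_X, polarization_X]
  fin_cases b <;> simp

theorem pderiv_polarization (β : J) (a b c : Fin 2) (P : R_J) :
    pderiv (β, c) (polarization a b P) =
      polarization a b (pderiv (β, c) P) + if a = c then pderiv (β, b) P else 0 := by
  classical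
  simp [polarization_apply, pderiv_X, Pi.single_apply, Finset.sum_add_distrib,
    pderiv_pderiv_comm (β, c), and_comm (a := _ = β), ite_and]

theorem polarization_polarization (a a' b b' : Fin 2) (P : R_J) :
    polarization a a' (polarization b b' P) =
      (∑ β : J, ∑ γ : J, X (β, a) * X (γ, b) * pderiv (β, a') (pderiv (γ, b') P)) +
        if b = a' then polarization a b' P else 0 := by
  conv_lhs => rw [polarization_apply a a']
  simp only [pderiv_polarization]
  simp only [polarization_apply b b', mul_add, Finset.sum_add_distrib, Finset.mul_sum,
    pderiv_pderiv_comm (_, a'), mul_assoc]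
  split_ifs <;> simp [polarization_apply]

theorem polarization_self_eq_nsmul {a : Fin 2} {P : R_J} {n : ℕ}
    (hP : P.IsWeightedHomogeneous (slotWeight a) n) : polarization a a P = n • P := by
  rw [← hP.sum_weight_X_mul_pderiv, polarization_apply, Fintype.sum_prod_type]
  refine Finset.sum_congr rfl fun γ _ => ?_
  simp [slotWeight, ite_smul]

theorem polarization_cayley (α β : J) (P : R_J) :
    polarization 0 1 (cayley α β P) = cayley α β (polarization 0 1 P) := by
  simp only [cayley, map_sub, pderiv_polarization, Fin.reduceEq, ↓reduceIte, add_zero]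
  rw [pderiv_pderiv_comm (α, 1)]
  abel

theorem polarization_bracket (α β : J) : polarization 0 1 (bracket α β : R_J) = 0 := by
  simp [bracket, polarization_X]
  ring

theorem sum_bracket_mul_pderiv (P : R_J) :
    ∑ α : J, ∑ β : J, bracket α β * pderiv (α, 0) (pderiv (β, 1) P) =
      polarization 0 0 (polarization 1 1 P) + polarization 1 1 P -
        polarization 1 0 (polarization 0 1 P) := by
  simp only [polarization_polarization, bracket, sub_mul, Finset.sum_sub_distrib]
  simp

theorem sum_bracket_mul_cayley (P : R_J) :
    ∑ α : J, ∑ β : J, bracket α β * cayley α β P =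
      2 • ∑ α : J, ∑ β : J, bracket α β * pderiv (α, 0) (pderiv (β, 1) P) := by
  have hswap : ∑ α : J, ∑ β : J, bracket α β * pderiv (β, 0) (pderiv (α, 1) P) =
      -∑ α : J, ∑ β : J, bracket α β * pderiv (α, 0) (pderiv (β, 1) P) := by
    rw [Finset.sum_comm, ← Finset.sum_neg_distrib]
    refine Finset.sum_congr rfl fun α _ => ?_
    rw [← Finset.sum_neg_distrib]
    exact Finset.sum_congr rfl fun β _ => by simp only [bracket]; ring
  simp only [cayley, mul_sub, Finset.sum_sub_distrib, hswap]
  rw [two_smul, sub_neg_eq_add]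

theorem sum_bracket_mul_cayley_of_polarization_eq_zero {P : R_J} {p q : ℕ}
    (h0 : P.IsWeightedHomogeneous (slotWeight 0) p)
    (h1 : P.IsWeightedHomogeneous (slotWeight 1) q) (hP : polarization 0 1 P = 0) :
    ∑ α : J, ∑ β : J, bracket α β * cayley α β P = (2 * (q * (p + 1))) • P := by
  rw [sum_bracket_mul_cayley, sum_bracket_mul_pderiv, hP, map_zero, sub_zero,
    polarization_self_eq_nsmul h1, map_nsmul, polarization_self_eq_nsmul h0, smul_smul,
    ← add_smul, smul_smul, mul_add_one]

theorem isHomogeneous_polarization {P : R_J} {n : ℕ} (hP : P.IsHomogeneous n) (a b : Fin 2) :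
    (polarization a b P).IsHomogeneous n := by
  rw [polarization_apply]
  exact IsWeightedHomogeneous.sum _ _ _ fun γ _ => hP.X_mul_pderiv rfl

theorem isWeightedHomogeneous_polarization_zero_one {P : R_J} {p : ℕ}
    (hP : P.IsWeightedHomogeneous (slotWeight 0) p) :
    (polarization 0 1 P).IsWeightedHomogeneous (slotWeight 0) (p + 1) := by
  rw [polarization_apply]
  exact IsWeightedHomogeneous.sum _ _ _ fun γ _ => hP.X_mul_pderiv (by simp [slotWeight])

theorem polarization_weightedHomogeneousComponent_eq_zero {P : R_J}
    (hP : polarization 0 1 P = 0) (n : ℕ) :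
    polarization 0 1 (weightedHomogeneousComponent 1 n P) = 0 := by
  have := weightedHomogeneousComponent_add_apply
    (L := (polarization (K := K) (J := J) 0 1).toLinearMap) (k := 0)
    (fun _ _ hQ => isHomogeneous_polarization hQ 0 1) n P
  simpa [hP] using this.symm

theorem polarization_weightedHomogeneousComponent_slotWeight_eq_zero {P : R_J}
    (hP : polarization 0 1 P = 0) (p : ℕ) :
    polarization 0 1 (weightedHomogeneousComponent (slotWeight 0) p P) = 0 := by
  have := weightedHomogeneousComponent_add_apply
    (L := (polarization (K := K) (J := J) 0 1).toLinearMap)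
    (fun _ _ hQ => isWeightedHomogeneous_polarization_zero_one hQ) p P
  simpa [hP] using this.symm

theorem isWeightedHomogeneous_slotWeight_one {P : R_J} {n p : ℕ}
    (hP : P.IsHomogeneous n) (h0 : P.IsWeightedHomogeneous (slotWeight 0) p) :
    P.IsWeightedHomogeneous (slotWeight 1) (n - p) := by
  intro d hd
  have hsplit : Finsupp.weight (slotWeight 0) d + Finsupp.weight (slotWeight 1) d =
      Finsupp.weight 1 d := by
    simp only [Finsupp.weight_eq_sum, ← Finset.sum_add_distrib, ← smul_add]
    refine Finset.sum_congr rfl fun ⟨γ, b⟩ _ => ?_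
    fin_cases b <;> simp [slotWeight]
  have := hP hd
  have := h0 hd
  omega

variable (K J) in
def generators : Set R_J :=
  {P | ∃ γ : J, P = X (γ, 0)} ∪
    {P | ∃ α β : J, α ≠ β ∧ ∃ m : J → ℕ,
      P = bracket α β * pderiv (α, 0) (pderiv (β, 0) (∏ γ : J, X (γ, 0) ^ m γ))}

theorem polarization_eq_zero_of_mem_supported {P : R_J}
    (hP : P ∈ supported K {i : J × Fin 2 | i.2 = 0}) : polarization 0 1 P = 0 := by
  refine derivation_eqOn_supported (D₂ := 0) ?_ hP
  rintro ⟨γ, b⟩ (rfl : b = 0)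
  simp [polarization_X]

theorem polarization_eq_zero_of_mem_adjoin {P : R_J}
    (hP : P ∈ Algebra.adjoin K (generators K J)) : polarization 0 1 P = 0 := by
  refine Derivation.eqOn_adjoin (D2 := 0) ?_ hP
  rintro _ (⟨γ, rfl⟩ | ⟨α, β, -, m, rfl⟩)
  · simp [polarization_X]
  · have hmonomial : (∏ γ : J, X (γ, 0) ^ m γ : R_J) ∈ supported K {i : J × Fin 2 | i.2 = 0} := by
      refine Subalgebra.prod_mem _ fun γ _ => Subalgebra.pow_mem _ ?_ _
      rw [supported_eq_adjoin_X]
      exact Algebra.subset_adjoin ⟨(γ, 0), rfl, rfl⟩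
    have hconv := polarization_eq_zero_of_mem_supported
      (pderiv_mem_supported (pderiv_mem_supported hmonomial (β, 0)) (α, 0))
    simp [hconv, polarization_bracket]

theorem bracket_mem_adjoin {α β : J} (h : α ≠ β) :
    bracket α β ∈ Algebra.adjoin K (generators K J) := by
  classical
  refine Algebra.subset_adjoin
    (Or.inr ⟨α, β, h, fun γ => (if α = γ then 1 else 0) + (if β = γ then 1 else 0), ?_⟩)
  simp only [pow_add, Finset.prod_mul_distrib, Finset.prod_pow_boole, Finset.mem_univ, if_true]
  have hne : ((α, 0) : J × Fin 2) ≠ (β, 0) := by simp [h]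
  rw [pderiv_mul, pderiv_X_self, pderiv_X_of_ne hne, zero_mul, zero_add, mul_one, pderiv_X_self,
    mul_one]

end CommRing

section Field

variable [Field K] [CharZero K] [Fintype J]

theorem mem_adjoin_of_isWeightedHomogeneous (q : ℕ) {p : ℕ} {P : R_J}
    (h0 : P.IsWeightedHomogeneous (slotWeight 0) p)
    (h1 : P.IsWeightedHomogeneous (slotWeight 1) q) (hP : polarization 0 1 P = 0) :
    P ∈ Algebra.adjoin K (generators K J) := by
  induction q generalizing p P with
  | zero =>
    have hx := mem_supported_of_isWeightedHomogeneous_slotWeight_one h1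
    rw [supported_eq_adjoin_X] at hx
    refine Algebra.adjoin_mono ?_ hx
    rintro _ ⟨⟨γ, b⟩, (rfl : b = 0), rfl⟩
    exact Or.inl ⟨γ, rfl⟩
  | succ q ih =>
    have hcayley (α β : J) : cayley α β P ∈ Algebra.adjoin K (generators K J) :=
      ih (isWeightedHomogeneous_cayley h0 α β) (by simpa using isWeightedHomogeneous_cayley h1 α β)
        (by rw [polarization_cayley, hP]; simp [cayley])
    have hsum : ∑ α : J, ∑ β : J, bracket α β * cayley α β P ∈
        Algebra.adjoin K (generators K J) := by
      refine Subalgebra.sum_mem _ fun α _ => Subalgebra.sum_mem _ fun β _ => ?_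
      rcases eq_or_ne α β with rfl | h
      · simp [bracket, mul_comm]
      · exact mul_mem (bracket_mem_adjoin h) (hcayley α β)
    rw [sum_bracket_mul_cayley_of_polarization_eq_zero h0 h1 hP,
      ← Nat.cast_smul_eq_nsmul K] at hsum
    have hc : ((2 * ((q + 1) * (p + 1)) : ℕ) : K) ≠ 0 := Nat.cast_ne_zero.mpr (by positivity)
    have := Subalgebra.smul_mem _ hsum ((2 * ((q + 1) * (p + 1)) : ℕ) : K)⁻¹
    rwa [inv_smul_smul₀ hc] at this

theorem mem_adjoin_of_polarization_eq_zero {F : R_J} (hF : polarization 0 1 F = 0) :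
    F ∈ Algebra.adjoin K (generators K J) := by
  refine mem_of_forall_weightedHomogeneousComponent_mem (1 : J × Fin 2 → ℕ) fun n => ?_
  refine mem_of_forall_weightedHomogeneousComponent_mem (slotWeight 0) fun p => ?_
  have hn := weightedHomogeneousComponent_isWeightedHomogeneous (w := (1 : J × Fin 2 → ℕ)) n F
  have hp := weightedHomogeneousComponent_isWeightedHomogeneous (w := slotWeight 0) p
    (weightedHomogeneousComponent 1 n F)
  exact mem_adjoin_of_isWeightedHomogeneous (n - p) hp
    (isWeightedHomogeneous_slotWeight_one (hn.weightedHomogeneousComponent _ p) hp)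
    (polarization_weightedHomogeneousComponent_slotWeight_eq_zero
      (polarization_weightedHomogeneousComponent_eq_zero hF n) p)

end Field

end RaisingKernel

open RaisingKernel

/-- with `Conv_{α,β}(P) = [α,β] · ∂²P/(∂α₀∂β₀)`, the kernel of the derivation
`D` of `R_J` (`D(α₀) = 0`, `D(α₁) = α₀`) equals the `K`-subalgebra generated by the
variables `γ₀` together with all convolutions `Conv_{α,β}(M)` of monomials `M` in the
variables `{γ₀ : γ ∈ J}`. -/
theorem stmt_7 (K : Type*) [Field K] [CharZero K] (J : Type*) [Fintype J]
    (D : Derivation K (MvPolynomial (J × Fin 2) K) (MvPolynomial (J × Fin 2) K))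
    (hD : D = MvPolynomial.mkDerivation K
      (fun v : J × Fin 2 => if v.2 = 0 then 0 else X (v.1, 0))) :
    {F : MvPolynomial (J × Fin 2) K | D F = 0} =
      (Algebra.adjoin K
        ({P | ∃ γ : J, P = X (γ, 0)} ∪
         {P | ∃ (α β : J), α ≠ β ∧ ∃ m : J → ℕ,
            P = (X (α, 0) * X (β, 1) - X (α, 1) * X (β, 0)) *
              pderiv (α, (0 : Fin 2)) (pderiv (β, (0 : Fin 2)) (∏ γ : J, X (γ, 0) ^ m γ))} :
          Set (MvPolynomial (J × Fin 2) K)) :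
        Set (MvPolynomial (J × Fin 2) K)) := by
  subst hD
  rw [mkDerivation_eq_polarization]
  ext F
  exact ⟨mem_adjoin_of_polarization_eq_zero, polarization_eq_zero_of_mem_adjoin⟩
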